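/- The fan graph F_n (a path on n vertices plus a dominating apex vertex) has pathwidth at most 2, and every tree-partition of F_n has width at least √n / 2; moreover F_n admits a tree-partition of width O(√n). -/

import Mathlib

/-- `B` is a path-partition of `G` indexed by `Fin m`: the bags partition the
vertex set and every edge joins vertices in bags with indices differing by at most 1. -/
def IsPathPartition {V : Type*} (G : SimpleGraph V) {m : ℕ} (B : Fin m → Finset V) : Prop :=
  (∀ v : V, ∃! i : Fin m, v ∈ B i) ∧
  ∀ ⦃v w : V⦄, G.Adj v w → ∀ ⦃i j : Fin m⦄, v ∈ B i → w ∈ B j →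
    (i.val : ℤ) - j.val ≤ 1 ∧ (j.val : ℤ) - i.val ≤ 1

/-- `B` is a path-decomposition of the part of `G` induced on `U`:
bags lie in `U`, every edge of `G` inside `U` is in a common bag, every vertex
of `U` is in some bag, and the bags containing a given vertex are consecutive. -/
def IsPathDecompOn {V : Type*} (G : SimpleGraph V) (U : Set V) {n : ℕ}
    (B : Fin n → Finset V) : Prop :=
  (∀ i, ↑(B i) ⊆ U) ∧
  (∀ ⦃v w : V⦄, G.Adj v w → v ∈ U → w ∈ U → ∃ i, v ∈ B i ∧ w ∈ B i) ∧
  (∀ v ∈ U, ∃ i, v ∈ B i) ∧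
  (∀ (v : V) (i j l : Fin n), i ≤ j → j ≤ l → v ∈ B i → v ∈ B l → v ∈ B j)

/-- The part of `G` induced on `U` has pathwidth at most `k`. -/
def PWleOn {V : Type*} (G : SimpleGraph V) (U : Set V) (k : ℕ) : Prop :=
  ∃ (n : ℕ) (B : Fin n → Finset V), 0 < n ∧ IsPathDecompOn G U B ∧
    ∀ i, (B i).card ≤ k + 1

/-- `G` has pathwidth at most `k`. -/
def PWle {V : Type*} (G : SimpleGraph V) (k : ℕ) : Prop :=
  PWleOn G Set.univ k

/-- `B` is a `T`-partition of `G`: the bags (indexed by the vertices of `T`)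
partition `V(G)` and every edge of `G` joins vertices in the same bag or in
bags indexed by adjacent nodes of `T`. -/
def IsTreePartition {ι V : Type*} (T : SimpleGraph ι) (G : SimpleGraph V)
    (B : ι → Finset V) : Prop :=
  (∀ v : V, ∃! x : ι, v ∈ B x) ∧
  ∀ ⦃v w : V⦄, G.Adj v w → ∀ ⦃x y : ι⦄, v ∈ B x → w ∈ B y → x = y ∨ T.Adj x y

/-- `C` is a tree-decomposition of `G` indexed by the tree `T`: every edge lies
in some bag and for each vertex the nodes whose bags contain it induce a
non-empty connected subgraph of `T`. -/
def IsTreeDecomp {ι V : Type*} (T : SimpleGraph ι) (G : SimpleGraph V)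
    (C : ι → Finset V) : Prop :=
  (∀ ⦃v w : V⦄, G.Adj v w → ∃ x, v ∈ C x ∧ w ∈ C x) ∧
  (∀ v : V, ∃ x, v ∈ C x) ∧
  (∀ v : V, (T.induce {x : ι | v ∈ C x}).Connected)

/-- `G` has maximum degree at most `d`. -/
def MaxDegLE {V : Type*} (G : SimpleGraph V) (d : ℕ) : Prop :=
  ∀ v : V, (G.neighborSet v).ncard ≤ d

/-- The graph obtained from `G` by deleting the vertices in `S`. -/
def delv {V : Type*} (G : SimpleGraph V) (S : Set V) : SimpleGraph V :=
  SimpleGraph.fromRel (fun a b => G.Adj a b ∧ a ∉ S ∧ b ∉ S)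

/-- The fan graph `F_n`: a path `v_1, …, v_n` (the vertices `1, …, n`) plus a
dominating apex vertex `0` adjacent to all of them. -/
def fan (n : ℕ) : SimpleGraph (Fin (n + 1)) :=
  SimpleGraph.fromRel (fun a b => a.val = 0 ∨ (0 < a.val ∧ a.val + 1 = b.val))


open SimpleGraph in
lemma no_triangle {ι : Type} {T : SimpleGraph ι} (hT : T.IsAcyclic) {a b c : ι}
    (hab : T.Adj a b) (hac : T.Adj a c) (hbc : T.Adj b c) : False := by
  have hb := (SimpleGraph.isAcyclic_iff_forall_adj_isBridge.mp hT) hbc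
  rw [SimpleGraph.isBridge_iff] at hb
  have h1 : (T \ SimpleGraph.fromEdgeSet {s(b, c)}).Adj b a := by
    simp only [SimpleGraph.sdiff_adj, SimpleGraph.fromEdgeSet_adj]
    refine ⟨hab.symm, ?_⟩
    simp only [Set.mem_singleton_iff, Sym2.eq_iff]
    rintro (⟨-, rfl⟩ | ⟨rfl, rfl⟩)
    · exact hac.ne rfl
    · exact hbc.ne rfl
  have h2 : (T \ SimpleGraph.fromEdgeSet {s(b, c)}).Adj a c := by
    simp only [SimpleGraph.sdiff_adj, SimpleGraph.fromEdgeSet_adj]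
    refine ⟨hac, ?_⟩
    simp only [Set.mem_singleton_iff, Sym2.eq_iff]
    rintro (⟨rfl, -⟩ | ⟨rfl, rfl⟩)
    · exact hab.ne rfl
    · exact hac.ne rfl
  exact hb ⟨SimpleGraph.Walk.cons h1 (SimpleGraph.Walk.cons h2 SimpleGraph.Walk.nil)⟩

def star0 : SimpleGraph ℕ := SimpleGraph.fromRel (fun a _ => a = 0)

lemma star0_adj {a b : ℕ} : star0.Adj a b ↔ a ≠ b ∧ (a = 0 ∨ b = 0) := by
  simp [star0, SimpleGraph.fromRel_adj]

lemma star0_isTree : star0.IsTree := by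
  constructor
  · rw [SimpleGraph.connected_iff]
    refine ⟨?_, ⟨0⟩⟩
    intro a b
    rcases eq_or_ne a b with rfl | hab
    · exact SimpleGraph.Reachable.refl _
    rcases eq_or_ne a 0 with rfl | ha
    · exact SimpleGraph.Adj.reachable (star0_adj.mpr ⟨hab, Or.inl rfl⟩)
    rcases eq_or_ne b 0 with rfl | hb
    · exact SimpleGraph.Adj.reachable (star0_adj.mpr ⟨hab, Or.inr rfl⟩)
    · exact (SimpleGraph.Adj.reachable (star0_adj.mpr ⟨ha, Or.inr rfl⟩)).trans
        (SimpleGraph.Adj.reachable (star0_adj.mpr ⟨Ne.symm hb, Or.inl rfl⟩))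
  · rw [SimpleGraph.isAcyclic_iff_forall_adj_isBridge]
    intro v w hvw
    rw [SimpleGraph.isBridge_iff]
    rw [SimpleGraph.reachable_delete_edges_iff_exists_walk]
    rintro ⟨p, hp⟩
    have key : ∀ (a : ℕ), a ≠ 0 → ∀ (q : star0.Walk a 0), s(a, 0) ∈ q.edges := by
      intro a ha q
      cases q with
      | nil => exact absurd rfl ha
      | @cons _ x _ h q =>
        rcases (star0_adj.mp h).2 with h0 | h0
        · exact absurd h0 ha
        · subst h0; simp [SimpleGraph.Walk.edges_cons]
    rcases (star0_adj.mp hvw).2 with h0 | h0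
    · subst h0
      have := key w (star0_adj.mp hvw).1.symm p.reverse
      rw [SimpleGraph.Walk.edges_reverse, List.mem_reverse] at this
      rw [Sym2.eq_swap] at this
      exact hp this
    · subst h0
      exact hp (key v (star0_adj.mp hvw).1 p)

lemma fan_adj {n : ℕ} {a b : Fin (n+1)} : (fan n).Adj a b ↔ a ≠ b ∧
    (a.val = 0 ∨ b.val = 0 ∨ a.val + 1 = b.val ∨ b.val + 1 = a.val) := by
  simp only [fan, SimpleGraph.fromRel_adj]
  constructor
  · rintro ⟨hne, (h | ⟨h1, h2⟩) | (h | ⟨h1, h2⟩)⟩ <;> exact ⟨hne, by omega⟩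
  · rintro ⟨hne, h⟩
    refine ⟨hne, ?_⟩
    have : a.val ≠ b.val := fun h => hne (Fin.ext h)
    rcases h with h | h | h | h
    · exact Or.inl (Or.inl h)
    · exact Or.inr (Or.inl h)
    · rcases Nat.eq_zero_or_pos a.val with h0 | h0
      · exact Or.inl (Or.inl h0)
      · exact Or.inl (Or.inr ⟨h0, h⟩)
    · rcases Nat.eq_zero_or_pos b.val with h0 | h0
      · exact Or.inr (Or.inl h0)
      · exact Or.inr (Or.inr ⟨h0, h⟩)

lemma fan_pw (n : ℕ) : PWle (fan n) 2 := by
  classical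
  refine ⟨n + 1, fun i => Finset.univ.filter
    (fun v : Fin (n+1) => v.val = 0 ∨ v.val = i.val ∨ v.val = i.val + 1), Nat.succ_pos n,
    ⟨fun i => by simp, ?_, ?_, ?_⟩, ?_⟩
  · intro v w hvw _ _
    rcases fan_adj.mp hvw with ⟨hne, h | h | h | h⟩
    · exact ⟨⟨w.val, w.isLt⟩, by simp only [Finset.mem_filter, Finset.mem_univ, true_and, Fin.val_mk]; omega, by simp⟩
    · exact ⟨⟨v.val, v.isLt⟩, by simp, by simp only [Finset.mem_filter, Finset.mem_univ, true_and, Fin.val_mk]; omega⟩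
    · exact ⟨⟨v.val, v.isLt⟩, by simp, by simp [h]⟩
    · exact ⟨⟨w.val, w.isLt⟩, by simp [h], by simp⟩
  · intro v _
    exact ⟨⟨v.val, v.isLt⟩, by simp⟩
  · intro v i j l hij hjl hvi hvl
    simp only [Finset.mem_filter, Finset.mem_univ, true_and] at hvi hvl ⊢
    have hij' : i.val ≤ j.val := hij
    have hjl' : j.val ≤ l.val := hjl
    omega
  · intro i
    calc (Finset.univ.filter
        (fun v : Fin (n+1) => v.val = 0 ∨ v.val = i.val ∨ v.val = i.val + 1)).card
        ≤ ({0, ⟨i.val, by omega⟩} ∪ (Finset.univ.filter (fun v : Fin (n+1) => v.val = i.val + 1)) : Finset (Fin (n+1))).card := by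
          apply Finset.card_le_card
          intro v hv
          simp only [Finset.mem_filter, Finset.mem_univ, true_and] at hv
          simp only [Finset.mem_union, Finset.mem_insert, Finset.mem_singleton,
            Finset.mem_filter, Finset.mem_univ, true_and]
          rcases hv with h | h | h
          · exact Or.inl (Or.inl (Fin.ext h))
          · exact Or.inl (Or.inr (Fin.ext h))
          · exact Or.inr h
      _ ≤ _ := by
          refine le_trans (Finset.card_union_le _ _) ?_
          have h2 : ({0, ⟨i.val, by omega⟩} : Finset (Fin (n+1))).card ≤ 2 :=
            Finset.card_insert_le _ _ |>.trans (by simp)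
          have h3 : (Finset.univ.filter (fun v : Fin (n+1) => v.val = i.val + 1)).card ≤ 1 := by
            apply Finset.card_le_one.mpr
            intro a ha b hb
            simp only [Finset.mem_filter] at ha hb
            exact Fin.ext (ha.2.trans hb.2.symm)
          omega

lemma fan_construction (n : ℕ) :
    ∃ B : ℕ → Finset (Fin (n + 1)), IsTreePartition star0 (fan n) B ∧
      ∀ x, (B x).card ≤ 1 * (Nat.sqrt n + 1) := by
  classical
  set s := Nat.sqrt n + 1 with hs
  have hs0 : 0 < s := Nat.succ_pos _
  refine ⟨fun x => match x with
    | 0 => Finset.univ.filter (fun v : Fin (n+1) => s ∣ v.val)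
    | (j+1) => Finset.univ.filter (fun v : Fin (n+1) => ¬ s ∣ v.val ∧ v.val / s = j),
    ⟨?_, ?_⟩, ?_⟩
  · -- unique bag
    intro v
    by_cases hd : s ∣ v.val
    · refine ⟨0, by simp [hd], ?_⟩
      rintro (_ | j) hy
      · rfl
      · simp only [Finset.mem_filter] at hy; exact absurd hd hy.2.1
    · refine ⟨v.val / s + 1, by simp [hd], ?_⟩
      rintro (_ | j) hy <;> simp only [Finset.mem_filter] at hy
      · exact absurd hy.2 hd
      · rw [hy.2.2]
  · -- edges
    intro v w hvw x y hvx hwy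
    have memchar : ∀ (u : Fin (n+1)) (z : ℕ),
        u ∈ (match z with
          | 0 => Finset.univ.filter (fun v : Fin (n+1) => s ∣ v.val)
          | (j+1) => Finset.univ.filter (fun v : Fin (n+1) => ¬ s ∣ v.val ∧ v.val / s = j)) →
        (s ∣ u.val ∧ z = 0) ∨ (¬ s ∣ u.val ∧ z = u.val / s + 1) := by
      rintro u (_ | j) hu <;> simp only [Finset.mem_filter] at hu
      · exact Or.inl ⟨hu.2, rfl⟩
      · exact Or.inr ⟨hu.2.1, by rw [hu.2.2]⟩
    have hv := memchar v x hvx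
    have hw := memchar w y hwy
    -- helper: if one is 0 and other arbitrary
    have star_or : ∀ a b : ℕ, a = 0 → a = b ∨ star0.Adj a b := by
      intro a b ha
      rcases eq_or_ne a b with h | h
      · exact Or.inl h
      · exact Or.inr (star0_adj.mpr ⟨h, Or.inl ha⟩)
    rcases hv with ⟨hdv, rfl⟩ | ⟨hdv, rfl⟩
    · rcases hw with ⟨hdw, rfl⟩ | ⟨hdw, rfl⟩
      · exact Or.inl rfl
      · exact star_or _ _ rfl
    · rcases hw with ⟨hdw, rfl⟩ | ⟨hdw, rfl⟩
      · rcases star_or 0 (v.val / s + 1) rfl with h | h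
        · exact Or.inl h.symm
        · exact Or.inr h.symm
      · -- both non-divisible: must be consecutive on the path, same quotient
        left
        rcases fan_adj.mp hvw with ⟨hne, h | h | h | h⟩
        · exact absurd (h ▸ Nat.dvd_zero s) hdv
        · exact absurd (h ▸ Nat.dvd_zero s) hdw
        · have : w.val / s = v.val / s := by
            rw [← h, Nat.succ_div, if_neg (h ▸ hdw)]; omega
          rw [this]
        · have : v.val / s = w.val / s := by
            rw [← h, Nat.succ_div, if_neg (h ▸ hdv)]; omega
          rw [this]
  · -- cards
    rintro (_ | j)
    · apply le_trans (Finset.card_le_card_of_injOn (fun v : Fin (n+1) => v.val / s)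
        (t := Finset.range s) ?_ ?_) (by simp)
      · intro v hv
        simp only [Finset.mem_coe, Finset.mem_range]
        have h1 : v.val / s ≤ n / s := Nat.div_le_div_right (by omega)
        have h2 : n < s * s := by rw [hs]; exact Nat.lt_succ_sqrt n
        have h3 : n / s < s := (Nat.div_lt_iff_lt_mul hs0).mpr h2
        exact lt_of_le_of_lt h1 h3
      · intro a ha b hb hab
        simp only [Finset.coe_filter, Set.mem_setOf_eq, Finset.mem_univ, true_and] at ha hb
        have hab' : a.val / s = b.val / s := hab
        have : a.val = b.val := by
          rw [← Nat.div_mul_cancel ha, ← Nat.div_mul_cancel hb, hab']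
        exact Fin.ext this
    · calc _ ≤ (Finset.Ico 1 s).card := by
            apply Finset.card_le_card_of_injOn (fun v : Fin (n+1) => v.val % s)
            · intro v hv
              simp only [Finset.mem_coe, Finset.mem_filter, Finset.mem_univ, true_and] at hv
              simp only [Finset.mem_coe, Finset.mem_Ico]
              exact ⟨Nat.one_le_iff_ne_zero.mpr (fun h => hv.1 (Nat.dvd_iff_mod_eq_zero.mpr h)), Nat.mod_lt _ hs0⟩
            · intro a ha b hb hab
              simp only [Finset.coe_filter, Set.mem_setOf_eq, Finset.mem_univ, true_and] at ha hb
              have hab' : a.val % s = b.val % s := hab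
              have : a.val = b.val := by
                rw [← Nat.div_add_mod a.val s, ← Nat.div_add_mod b.val s, ha.2, hb.2, hab']
              exact Fin.ext this
      _ ≤ 1 * (Nat.sqrt n + 1) := by
            rw [Nat.card_Ico, one_mul]; omega


lemma fan_lower (n : ℕ) {ι : Type} {T : SimpleGraph ι} (hT : T.IsTree)
    (B : ι → Finset (Fin (n + 1))) (hP : IsTreePartition T (fan n) B) :
    ∃ x, Real.sqrt n / 2 ≤ ((B x).card : ℝ) := by
  classical
  obtain ⟨hpart, hedge⟩ := hP
  choose g hg hu using hpart
  set x0 := g 0 with hx0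
  by_contra hcon
  push_neg at hcon
  set b := Nat.floor (Real.sqrt n / 2) with hbdef
  have hb : ∀ x, (B x).card ≤ b := fun x => Nat.le_floor (le_of_lt (hcon x))
  have hb1 : 1 ≤ b := le_trans (Finset.card_pos.mpr ⟨0, hg 0⟩) (hb x0)
  have hbn : 4 * (b * b) ≤ n := by
    have h1 : (b : ℝ) ≤ Real.sqrt n / 2 := Nat.floor_le (by positivity)
    have h2 : (2 * b : ℝ) ≤ Real.sqrt n := by linarith
    have h3 : (2 * b : ℝ) * (2 * b) ≤ Real.sqrt n * Real.sqrt n :=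
      mul_le_mul h2 h2 (by positivity) (Real.sqrt_nonneg _)
    rw [Real.mul_self_sqrt (by positivity)] at h3
    have : ((4 * (b * b) : ℕ) : ℝ) ≤ (n : ℝ) := by push_cast; nlinarith
    exact_mod_cast this
  -- vertex of index k
  set vtx : ℕ → Fin (n+1) := fun k => if h : k < n + 1 then ⟨k, h⟩ else 0 with hvdef
  have hvtx : ∀ (k : ℕ) (h : k < n + 1), vtx k = ⟨k, h⟩ := fun k h => dif_pos h
  have hvval : ∀ k, k ≤ n → (vtx k).val = k := by
    intro k h
    rw [hvtx k (by omega)]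
  -- the bag-index function on ℕ
  set g' : ℕ → ι := fun k => g (vtx k) with hg'def
  have hgmem : ∀ k, vtx k ∈ B (g' k) := fun k => hg (vtx k)
  set P : Finset ℕ := Finset.Icc 1 n with hPdef
  set S : Finset ℕ := P.filter (fun k => g' k = x0) with hSdef
  set R : Finset ℕ := P.filter (fun k => ¬ g' k = x0) with hRdef
  -- vertices of S map into (B x0).erase 0
  have cardS : S.card + 1 ≤ b := by
    have h1 : S.card ≤ ((B x0).erase 0).card := by
      apply Finset.card_le_card_of_injOn vtx
      · intro k hk
        simp only [Finset.mem_coe, hSdef, Finset.mem_filter, hPdef, Finset.mem_Icc] at hk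
        apply Finset.mem_erase.mpr
        constructor
        · intro hzero
          have h0 := congrArg Fin.val hzero
          rw [hvval k (by omega)] at h0
          have : ((0 : Fin (n+1)) : ℕ) = 0 := rfl
          omega
        · have h5 := hgmem k
          rw [hk.2] at h5
          exact h5
      · intro a ha b' hb' hab
        simp only [hSdef, Finset.mem_filter, hPdef, Finset.mem_Icc, Finset.mem_coe] at ha hb'
        have := congrArg Fin.val hab
        rw [hvval a (by omega), hvval b' (by omega)] at this
        exact this
    have h2 : ((B x0).erase 0).card = (B x0).card - 1 := Finset.card_erase_of_mem (hg 0)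
    have h3 := hb x0
    have h4 : 1 ≤ (B x0).card := Finset.card_pos.mpr ⟨0, hg 0⟩
    omega
  -- predecessor function
  set F : ℕ → Finset ℕ := fun k => (insert 0 S).filter (· < k) with hFdef
  have hFne : ∀ k, 1 ≤ k → (F k).Nonempty := fun k hk =>
    ⟨0, by simp only [hFdef, Finset.mem_filter]; exact ⟨Finset.mem_insert_self 0 S, by omega⟩⟩
  set p : ℕ → ℕ := fun k => if h : (F k).Nonempty then (F k).max' h else 0 with hpdef
  have hpmem : ∀ k, 1 ≤ k → p k ∈ F k := by
    intro k hk
    simp only [hpdef, dif_pos (hFne k hk)]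
    exact Finset.max'_mem _ _
  have hp_lt : ∀ k, 1 ≤ k → p k < k := by
    intro k hk
    have := hpmem k hk
    simp only [hFdef, Finset.mem_filter] at this
    exact this.2
  have hp_in : ∀ k, 1 ≤ k → p k ∈ insert 0 S := by
    intro k hk
    have := hpmem k hk
    simp only [hFdef, Finset.mem_filter] at this
    exact this.1
  have hp_ub : ∀ k, 1 ≤ k → ∀ j ∈ insert 0 S, j < k → j ≤ p k := by
    intro k hk j hj hjk
    simp only [hpdef, dif_pos (hFne k hk)]
    exact Finset.le_max' _ _ (by simp only [hFdef, Finset.mem_filter]; exact ⟨hj, hjk⟩)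
  -- step lemma
  have hacyc : T.IsAcyclic := ((SimpleGraph.isTree_iff T).mp hT).2
  have apexadj : ∀ (k : ℕ), 1 ≤ k → k ≤ n → g' k ≠ x0 → T.Adj x0 (g' k) := by
    intro k hk1 hkn hkx
    have hadj : (fan n).Adj 0 (vtx k) := by
      apply fan_adj.mpr
      constructor
      · intro hq
        have h0 := congrArg Fin.val hq
        rw [hvval k (by omega)] at h0
        have : ((0 : Fin (n+1)) : ℕ) = 0 := rfl
        omega
      · exact Or.inl rfl
    rcases hedge hadj (hg 0) (hgmem k) with h | h
    · exact absurd h.symm hkx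
    · exact h
  have step : ∀ k, 1 ≤ k → k + 1 ≤ n → g' k ≠ x0 → g' (k+1) ≠ x0 → g' (k+1) = g' k := by
    intro k hk1 hkn hx hy
    have hadj : (fan n).Adj (vtx k) (vtx (k+1)) := by
      apply fan_adj.mpr
      constructor
      · intro hq
        have h0 := congrArg Fin.val hq
        rw [hvval k (by omega), hvval (k+1) (by omega)] at h0
        omega
      · refine Or.inr (Or.inr (Or.inl ?_))
        rw [hvval k (by omega), hvval (k+1) (by omega)]
    rcases hedge hadj (hgmem k) (hgmem (k+1)) with h | h
    · exact h.symm
    · exact (no_triangle hacyc (apexadj k hk1 (by omega) hx)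
        (apexadj (k+1) (by omega) hkn hy) h).elim
  -- segment lemma
  have seg : ∀ d k, 1 ≤ k → k + d ≤ n →
      (∀ j, k ≤ j → j ≤ k + d → g' j ≠ x0) → g' (k + d) = g' k := by
    intro d
    induction d with
    | zero => intro k _ _ _; rfl
    | succ d ih =>
      intro k hk1 hkd hall
      have h1 : g' (k + d + 1) = g' (k + d) := by
        apply step (k + d) (by omega) (by omega)
        · exact hall (k + d) (by omega) (by omega)
        · exact hall (k + d + 1) (by omega) (by omega)
      have h2 : g' (k + d) = g' k := ih k hk1 (by omega)
        (fun j hj1 hj2 => hall j hj1 (by omega))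
      rw [show k + (d + 1) = k + d + 1 by omega, h1, h2]
  -- fiber bound
  have fiber : ∀ a, (R.filter (fun k => p k = a)).card ≤ b := by
    intro a
    set Q := R.filter (fun k => p k = a) with hQdef
    rcases Q.eq_empty_or_nonempty with hQ | hQ
    · simp [hQ]
    have hmin := Q.min'_mem hQ
    set v0 := Q.min' hQ with hv0
    have hQmem : ∀ k ∈ Q, 1 ≤ k ∧ k ≤ n ∧ g' k ≠ x0 ∧ p k = a := by
      intro k hk
      simp only [hQdef, hRdef, Finset.mem_filter, hPdef, Finset.mem_Icc] at hk
      exact ⟨hk.1.1.1, hk.1.1.2, hk.1.2, hk.2⟩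
    obtain ⟨hv01, hv0n, hv0x, hv0p⟩ := hQmem v0 hmin
    have hsame : ∀ k ∈ Q, g' k = g' v0 := by
      intro k hk
      obtain ⟨hk1, hkn, hkx, hkp⟩ := hQmem k hk
      have hle : v0 ≤ k := Q.min'_le k hk
      have hmid : g' (v0 + (k - v0)) = g' v0 := by
        apply seg (k - v0) v0 hv01 (by omega)
        intro j hj1 hj2
        intro hjx
        have hjS : j ∈ S := by
          simp only [hSdef, Finset.mem_filter, hPdef, Finset.mem_Icc]
          exact ⟨⟨by omega, by omega⟩, hjx⟩
        have hjk : j ≠ k := by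
          intro h; rw [h] at hjx; exact hkx hjx
        have hjk' : j < k := by omega
        have h1 : j ≤ p k := hp_ub k hk1 j (Finset.mem_insert_of_mem hjS) hjk'
        have h2 : p v0 < v0 := hp_lt v0 hv01
        rw [hkp] at h1
        rw [hv0p] at h2
        omega
      rw [show v0 + (k - v0) = k by omega] at hmid
      exact hmid
    calc Q.card ≤ (B (g' v0)).card := by
          apply Finset.card_le_card_of_injOn vtx
          · intro k hk
            have h5 := hgmem k
            rw [hsame k hk] at h5
            exact h5
          · intro a1 ha1 a2 ha2 h12
            obtain ⟨h11, h1n, -, -⟩ := hQmem a1 ha1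
            obtain ⟨h21, h2n, -, -⟩ := hQmem a2 ha2
            have := congrArg Fin.val h12
            rw [hvval a1 (by omega), hvval a2 (by omega)] at this
            exact this
      _ ≤ b := hb _
  -- image bound
  have himg : (R.image p).card ≤ S.card + 1 := by
    calc (R.image p).card ≤ (insert 0 S).card := by
          apply Finset.card_le_card
          intro a ha
          obtain ⟨k, hk, rfl⟩ := Finset.mem_image.mp ha
          simp only [hRdef, Finset.mem_filter, hPdef, Finset.mem_Icc] at hk
          exact hp_in k hk.1.1
      _ ≤ S.card + 1 := Finset.card_insert_le _ _
  have cardR : R.card ≤ b * b := by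
    calc R.card ≤ b * (R.image p).card := Finset.card_le_mul_card_image R b (fun a _ => fiber a)
      _ ≤ b * (S.card + 1) := Nat.mul_le_mul_left _ himg
      _ ≤ b * b := Nat.mul_le_mul_left _ cardS
  have hPcard : S.card + R.card = n := by
    rw [hSdef, hRdef, Finset.card_filter_add_card_filter_not, hPdef, Nat.card_Icc]
    omega
  nlinarith [cardS, cardR, hPcard, hbn, hb1]

/-- The fan graph `F_n` has pathwidth at most 2, every
tree-partition of `F_n` has width at least `√n / 2`, and `F_n` admits a
tree-partition of width `O(√n)`. -/
theorem stmt19 :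
    ∃ C : ℕ, ∀ n : ℕ,
      PWle (fan n) 2 ∧
      (∀ (ι : Type) (T : SimpleGraph ι), T.IsTree →
        ∀ B : ι → Finset (Fin (n + 1)), IsTreePartition T (fan n) B →
          ∃ x, Real.sqrt n / 2 ≤ ((B x).card : ℝ)) ∧
      (∃ (ι : Type) (T : SimpleGraph ι), T.IsTree ∧
        ∃ B : ι → Finset (Fin (n + 1)), IsTreePartition T (fan n) B ∧
          ∀ x, (B x).card ≤ C * (Nat.sqrt n + 1)) := by
  refine ⟨1, fun n => ⟨fan_pw n, fun ι T hT B hP => fan_lower n hT B hP,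
    ⟨ℕ, star0, star0_isTree, fan_construction n⟩⟩⟩
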